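/- Gauss's hypergeometric theorem: for complex a, b, c with Re(c - a - b) > 0 and c not a nonpositive integer, the series \sum_{k=0}^{\infty} ((a)_k (b)_k)/((c)_k k!) converges and equals \Gamma(c)\Gamma(c-a-b)/(\Gamma(c-a)\Gamma(c-b)). -/

import Mathlib

open Complex

/-!
Write `F(c) = ∑ₖ (a)ₖ (b)ₖ / ((c)ₖ k!)`. Gauss's contiguous relation
`c (c - a - b) F(c) = (c - a) (c - b) F(c + 1)` holds because the corresponding combination of the
terms telescopes; iterating it gives `(c)ₙ (c - a - b)ₙ F(c) = (c - a)ₙ (c - b)ₙ F(c + n)`. As `n → ∞`, `F(c + n) → 1` by dominated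
convergence, and Gauss's limit formula for `Γ` gives `(s)ₙ / (t)ₙ · n^(t - s) → Γ(t) / Γ(s)`, so
the Pochhammer ratio tends to `Γ(c) Γ(c - a - b) / (Γ(c - a) Γ(c - b))`. The same asymptotics show
that the terms are `O(n^(-1 - Re(c - a - b)))`, whence convergence.
-/

open Filter Finset Topology Asymptotics Polynomial Nat

theorem ascPochhammer_eval_eq_prod_range {R : Type*} [CommSemiring R] (n : ℕ) (r : R) :
    (ascPochhammer R n).eval r = ∏ j ∈ range n, (r + j) := by
  induction n with
  | zero => simp
  | succ n ih => rw [ascPochhammer_succ_eval, ih, prod_range_succ]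

theorem ascPochhammer_eval_ne_zero {R : Type*} [CommRing R] [IsDomain R] {r : R}
    (hr : ∀ m : ℕ, r ≠ -m) (n : ℕ) : (ascPochhammer R n).eval r ≠ 0 := by
  rw [Ne, ascPochhammer_eval_eq_zero_iff]
  rintro ⟨m, -, hm⟩
  exact hr m (by rw [hm, neg_neg])

namespace Complex

theorem ne_neg_natCast_of_re_pos {s : ℂ} (hs : 0 < s.re) (m : ℕ) : s ≠ -m := by
  rintro rfl
  simp at hs
  linarith

theorem norm_ascPochhammer_eval_le (z : ℂ) (n : ℕ) :
    ‖(ascPochhammer ℂ n).eval z‖ ≤ (ascPochhammer ℝ n).eval ‖z‖ := by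
  rw [ascPochhammer_eval_eq_prod_range, ascPochhammer_eval_eq_prod_range, norm_prod]
  gcongr with j
  exact (norm_add_le _ _).trans_eq (by rw [norm_natCast])

theorem ascPochhammer_eval_le_norm {σ : ℝ} {z : ℂ} (hσ : 0 ≤ σ) (hσz : σ ≤ z.re) (n : ℕ) :
    (ascPochhammer ℝ n).eval σ ≤ ‖(ascPochhammer ℂ n).eval z‖ := by
  rw [ascPochhammer_eval_eq_prod_range, ascPochhammer_eval_eq_prod_range, norm_prod]
  gcongr with j
  calc σ + j ≤ (z + j).re := by simpa using hσz
    _ ≤ ‖z + j‖ := re_le_norm _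

theorem ofReal_ascPochhammer_eval (x : ℝ) (n : ℕ) :
    (((ascPochhammer ℝ n).eval x : ℝ) : ℂ) = (ascPochhammer ℂ n).eval (x : ℂ) := by
  simp [ascPochhammer_eval_eq_prod_range]

theorem tendsto_GammaSeq_inv (s : ℂ) :
    Tendsto (fun n ↦ (GammaSeq s n)⁻¹) atTop (𝓝 (Gamma s)⁻¹) := by
  by_cases hs : ∀ m : ℕ, s ≠ -m
  · exact (GammaSeq_tendsto_Gamma s).inv₀ (Gamma_ne_zero hs)
  push Not at hs
  obtain ⟨m, rfl⟩ := hs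
  rw [Gamma_neg_nat_eq_zero, inv_zero]
  refine tendsto_const_nhds.congr' ?_
  filter_upwards [eventually_ge_atTop m] with n hn
  rw [GammaSeq, prod_eq_zero (mem_range.2 (Nat.lt_succ_of_le hn)) (by ring), div_zero, inv_zero]

/-- Gauss's limit formula `Γ(s) = lim n! n^(s-1) / (s)ₙ`, inverted so that it also holds at the
poles of `Γ`. -/
theorem tendsto_ascPochhammer_div_factorial_mul_cpow (s : ℂ) :
    Tendsto (fun n : ℕ ↦ (ascPochhammer ℂ n).eval s / (n ! * (n : ℂ) ^ (s - 1))) atTop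
      (𝓝 (Gamma s)⁻¹) := by
  have h := (tendsto_GammaSeq_inv s).mul (tendsto_natCast_div_add_atTop s)
  rw [mul_one] at h
  refine h.congr' ?_
  filter_upwards [eventually_ne_atTop 0,
    tendsto_natCast_atTop_cobounded.eventually_ne_cobounded (-s)] with n hn hns
  have hn' : (n : ℂ) ≠ 0 := Nat.cast_ne_zero.2 hn
  have hsn : (n : ℂ) + s ≠ 0 := fun h ↦ hns (eq_neg_of_add_eq_zero_left h)
  rw [GammaSeq, inv_div, ← ascPochhammer_eval_eq_prod_range, ascPochhammer_succ_eval,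
    cpow_sub _ _ hn', cpow_one]
  field_simp
  ring

theorem tendsto_ascPochhammer_div_ascPochhammer_mul_cpow (s : ℂ) {t : ℂ} (ht : ∀ m : ℕ, t ≠ -m) :
    Tendsto (fun n : ℕ ↦
        (ascPochhammer ℂ n).eval s / (ascPochhammer ℂ n).eval t * (n : ℂ) ^ (t - s))
      atTop (𝓝 (Gamma t / Gamma s)) := by
  have h := (tendsto_ascPochhammer_div_factorial_mul_cpow s).div
    (tendsto_ascPochhammer_div_factorial_mul_cpow t) (inv_ne_zero (Gamma_ne_zero ht))
  rw [inv_div_inv] at h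
  refine h.congr' ?_
  filter_upwards [eventually_ne_atTop 0] with n hn
  have hn' : (n : ℂ) ≠ 0 := Nat.cast_ne_zero.2 hn
  have hfac : (n ! : ℂ) ≠ 0 := Nat.cast_ne_zero.2 n.factorial_ne_zero
  have hns : (n : ℂ) ^ s ≠ 0 := cpow_ne_zero_iff.2 (.inl hn')
  have hnt : (n : ℂ) ^ t ≠ 0 := cpow_ne_zero_iff.2 (.inl hn')
  simp only [Pi.div_apply]
  rw [cpow_sub _ _ hn', cpow_sub _ _ hn', cpow_sub _ _ hn', cpow_one]
  field_simp

theorem tendsto_ascPochhammer_mul_div_ascPochhammer_mul (a b : ℂ) {c : ℂ}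
    (hc : ∀ m : ℕ, c ≠ -m) (hcab : ∀ m : ℕ, c - a - b ≠ -m) :
    Tendsto (fun n : ℕ ↦ (ascPochhammer ℂ n).eval (c - a) * (ascPochhammer ℂ n).eval (c - b)
        / ((ascPochhammer ℂ n).eval c * (ascPochhammer ℂ n).eval (c - a - b))) atTop
      (𝓝 (Gamma c * Gamma (c - a - b) / (Gamma (c - a) * Gamma (c - b)))) := by
  have h := (tendsto_ascPochhammer_div_ascPochhammer_mul_cpow (c - a) hc).mul
    (tendsto_ascPochhammer_div_ascPochhammer_mul_cpow (c - b) hcab)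
  rw [div_mul_div_comm (Gamma c)] at h
  refine h.congr' ?_
  filter_upwards [eventually_ne_atTop 0] with n hn
  have hpow : (n : ℂ) ^ (c - (c - a)) ≠ 0 := cpow_ne_zero_iff.2 (.inl (Nat.cast_ne_zero.2 hn))
  rw [show c - a - b - (c - b) = -(c - (c - a)) by ring, cpow_neg]
  field_simp

section Hypergeometric

variable (a b : ℂ) {c : ℂ}

theorem tendsto_ordinaryHypergeometricCoefficient_mul_cpow (hc : ∀ m : ℕ, c ≠ -m) :
    Tendsto (fun n : ℕ ↦ ordinaryHypergeometricCoefficient a b c n * (n : ℂ) ^ (1 + (c - a - b)))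
      atTop (𝓝 (Gamma c / (Gamma a * Gamma b))) := by
  have h := (tendsto_ascPochhammer_div_ascPochhammer_mul_cpow a hc).mul
    (tendsto_ascPochhammer_div_ascPochhammer_mul_cpow b
      (ne_neg_natCast_of_re_pos (s := 1) (by simp)))
  rw [Gamma_one, mul_one_div, div_div] at h
  refine h.congr' ?_
  filter_upwards [eventually_ne_atTop 0] with n hn
  rw [show 1 + (c - a - b) = (c - a) + (1 - b) by ring, cpow_add _ _ (Nat.cast_ne_zero.2 hn),
    ascPochhammer_eval_one]
  ring

theorem isBigO_ordinaryHypergeometricCoefficient (hc : ∀ m : ℕ, c ≠ -m) :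
    ordinaryHypergeometricCoefficient a b c =O[atTop]
      fun n : ℕ ↦ (n : ℝ) ^ (-(1 + (c - a - b).re)) := by
  have hpow : (fun n : ℕ ↦ (n : ℂ) ^ (-(1 + (c - a - b)))) =O[atTop]
      fun n : ℕ ↦ (n : ℝ) ^ (-(1 + (c - a - b).re)) := by
    refine IsBigO.of_bound' ?_
    filter_upwards [eventually_gt_atTop 0] with n hn
    simp [norm_natCast_cpow_of_pos hn, le_abs_self]
  refine (((tendsto_ordinaryHypergeometricCoefficient_mul_cpow a b hc).isBigO_one ℝ).mul
    hpow).congr' ?_ (by simp)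
  filter_upwards [eventually_ne_atTop 0] with n hn
  rw [cpow_neg, mul_assoc, mul_inv_cancel₀ (cpow_ne_zero_iff.2 (.inl (Nat.cast_ne_zero.2 hn))),
    mul_one]

theorem summable_norm_ordinaryHypergeometricCoefficient
    (hc : ∀ m : ℕ, c ≠ -m) (hre : 0 < (c - a - b).re) :
    Summable fun n ↦ ‖ordinaryHypergeometricCoefficient a b c n‖ :=
  summable_of_isBigO_nat (Real.summable_nat_rpow.2 (by linarith))
    (isBigO_ordinaryHypergeometricCoefficient a b hc).norm_left

theorem tendsto_natCast_mul_ordinaryHypergeometricCoefficient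
    (hc : ∀ m : ℕ, c ≠ -m) (hre : 0 < (c - a - b).re) :
    Tendsto (fun n : ℕ ↦ (n : ℂ) * ordinaryHypergeometricCoefficient a b c n) atTop (𝓝 0) := by
  have hO := (isBigO_of_le atTop fun n : ℕ ↦ (by simp : ‖(n : ℂ)‖ ≤ ‖(n : ℝ)‖)).mul
    (isBigO_ordinaryHypergeometricCoefficient a b hc)
  refine hO.trans_tendsto (((tendsto_rpow_neg_atTop hre).comp
    tendsto_natCast_atTop_atTop).congr' ?_)
  filter_upwards [eventually_gt_atTop 0] with n hn
  rw [Function.comp_apply, neg_add, Real.rpow_add (Nat.cast_pos.2 hn), Real.rpow_neg_one,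
    mul_inv_cancel_left₀ (Nat.cast_ne_zero.2 hn.ne')]

theorem ordinaryHypergeometricCoefficient_contiguous (hc : ∀ m : ℕ, c ≠ -m) (k : ℕ) :
    c * (c - a - b) * ordinaryHypergeometricCoefficient a b c k
        - (c - a) * (c - b) * ordinaryHypergeometricCoefficient a b (c + 1) k
      = c * ((k : ℂ) * ordinaryHypergeometricCoefficient a b c k
        - ((k + 1 : ℕ) : ℂ) * ordinaryHypergeometricCoefficient a b c (k + 1)) := by
  have hc0 : c ≠ 0 := by simpa using hc 0
  have hck : c + k ≠ 0 := fun h ↦ hc k (eq_neg_of_add_eq_zero_left h)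
  have hpc := ascPochhammer_eval_ne_zero hc k
  have hshift : (ascPochhammer ℂ k).eval (c + 1) = (ascPochhammer ℂ k).eval c * (c + k) / c := by
    rw [eq_div_iff hc0, ← ascPochhammer_succ_eval, ascPochhammer_succ_left, eval_mul, eval_X,
      eval_comp, eval_add, eval_X, eval_one, mul_comm]
  simp only [ordinaryHypergeometricCoefficient, ascPochhammer_succ_eval, hshift, factorial_succ]
  push_cast
  field_simp
  ring

theorem tsum_ordinaryHypergeometricCoefficient_contiguous
    (hc : ∀ m : ℕ, c ≠ -m) (hre : 0 < (c - a - b).re) :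
    c * (c - a - b) * ∑' k, ordinaryHypergeometricCoefficient a b c k
      = (c - a) * (c - b) * ∑' k, ordinaryHypergeometricCoefficient a b (c + 1) k := by
  have hc₁ : ∀ m : ℕ, c + 1 ≠ -m := fun m h ↦ hc (m + 1) (by push_cast; linear_combination h)
  have hre₁ : 0 < (c + 1 - a - b).re := by simp only [sub_re, add_re, one_re] at hre ⊢; linarith
  have hS := ((summable_norm_ordinaryHypergeometricCoefficient a b hc hre).of_norm.hasSum.mul_left
    (c * (c - a - b))).sub
    ((summable_norm_ordinaryHypergeometricCoefficient a b hc₁ hre₁).of_norm.hasSum.mul_left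
    ((c - a) * (c - b)))
  rw [← sub_eq_zero]
  refine tendsto_nhds_unique hS.tendsto_sum_nat ?_
  simp_rw [ordinaryHypergeometricCoefficient_contiguous a b hc, ← mul_sum, sum_range_sub']
  simpa using (tendsto_natCast_mul_ordinaryHypergeometricCoefficient a b hc hre).const_mul (-c)

theorem ascPochhammer_mul_tsum_ordinaryHypergeometricCoefficient
    (hc : ∀ m : ℕ, c ≠ -m) (hre : 0 < (c - a - b).re) (n : ℕ) :
    (ascPochhammer ℂ n).eval c * (ascPochhammer ℂ n).eval (c - a - b)
        * ∑' k, ordinaryHypergeometricCoefficient a b c k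
      = (ascPochhammer ℂ n).eval (c - a) * (ascPochhammer ℂ n).eval (c - b)
        * ∑' k, ordinaryHypergeometricCoefficient a b (c + n) k := by
  induction n with
  | zero => simp
  | succ n ih =>
    have hcn : ∀ m : ℕ, c + n ≠ -m := fun m h ↦ hc (m + n) (by push_cast; linear_combination h)
    have hren : 0 < (c + n - a - b).re := by
      simp only [sub_re, add_re, natCast_re] at hre ⊢; linarith [n.cast_nonneg (α := ℝ)]
    have hstep := tsum_ordinaryHypergeometricCoefficient_contiguous a b hcn hren
    rw [Nat.cast_succ, ← add_assoc]
    simp only [ascPochhammer_succ_eval]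
    linear_combination (c + n) * (c - a - b + n) * ih
      + (ascPochhammer ℂ n).eval (c - a) * (ascPochhammer ℂ n).eval (c - b) * hstep

theorem norm_ordinaryHypergeometricCoefficient_le {z : ℂ} {σ : ℝ} (hσ : 0 < σ)
    (hσz : σ ≤ z.re) (k : ℕ) :
    ‖ordinaryHypergeometricCoefficient a b z k‖
      ≤ ordinaryHypergeometricCoefficient ‖a‖ ‖b‖ σ k := by
  have ha := norm_ascPochhammer_eval_le a k
  have hb := norm_ascPochhammer_eval_le b k
  have hz := ascPochhammer_eval_le_norm hσ.le hσz k
  have hσk := ascPochhammer_pos k σ hσ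
  have ha₀ := (norm_nonneg _).trans ha
  have hb₀ := (norm_nonneg _).trans hb
  simp only [ordinaryHypergeometricCoefficient, norm_mul, norm_inv, norm_natCast]
  gcongr

end Hypergeometric

theorem _root_.Real.summable_ordinaryHypergeometricCoefficient {a b c : ℝ} (hc : ∀ m : ℕ, c ≠ -m)
    (habc : a + b < c) : Summable (ordinaryHypergeometricCoefficient a b c) := by
  have h := (summable_norm_ordinaryHypergeometricCoefficient (a : ℂ) (b : ℂ) (c := (c : ℂ))
    (fun m h ↦ hc m (by exact_mod_cast h)) (by simp; linarith)).of_norm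
  rw [← summable_ofReal]
  refine h.congr fun k ↦ ?_
  simp [ordinaryHypergeometricCoefficient, ← ofReal_ascPochhammer_eval]

theorem tendsto_ordinaryHypergeometricCoefficient_add_natCast (a b c : ℂ) (k : ℕ) :
    Tendsto (fun n : ℕ ↦ ordinaryHypergeometricCoefficient a b (c + n) k) atTop
      (𝓝 (if k = 0 then 1 else 0)) := by
  rcases k with _ | k
  · simp [ordinaryHypergeometricCoefficient]
  have hdeg : 0 < (ascPochhammer ℂ (k + 1)).degree := by
    rw [degree_eq_natDegree (monic_ascPochhammer ℂ _).ne_zero, ascPochhammer_natDegree]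
    exact_mod_cast k.succ_pos
  have hinv : Tendsto (fun n : ℕ ↦ ((ascPochhammer ℂ (k + 1)).eval (c + n))⁻¹) atTop (𝓝 0) :=
    tendsto_inv₀_cobounded.comp <| tendsto_norm_atTop_iff_cobounded.1 <|
      (ascPochhammer ℂ (k + 1)).tendsto_norm_atTop hdeg <| tendsto_norm_atTop_iff_cobounded.2 <|
        (tendsto_const_add_cobounded c).comp tendsto_natCast_atTop_cobounded
  simpa using hinv.const_mul
    (((k + 1)! : ℂ)⁻¹ * (ascPochhammer ℂ (k + 1)).eval a * (ascPochhammer ℂ (k + 1)).eval b)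

theorem tendsto_tsum_ordinaryHypergeometricCoefficient_add_natCast (a b c : ℂ) :
    Tendsto (fun n : ℕ ↦ ∑' k, ordinaryHypergeometricCoefficient a b (c + n) k) atTop (𝓝 1) := by
  set σ := ‖a‖ + ‖b‖ + 1
  have hσ : 0 < σ := by positivity
  have hre : Tendsto (fun n : ℕ ↦ (c + n).re) atTop atTop := by
    simpa using tendsto_atTop_add_const_left _ c.re tendsto_natCast_atTop_atTop
  simpa using tendsto_tsum_of_dominated_convergence
    (Real.summable_ordinaryHypergeometricCoefficient (a := ‖a‖) (b := ‖b‖) (c := σ)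
      (fun m ↦ by linarith [m.cast_nonneg (α := ℝ)]) (by linarith))
    (tendsto_ordinaryHypergeometricCoefficient_add_natCast a b c)
    (by filter_upwards [hre.eventually_ge_atTop σ] with n hn k
        exact norm_ordinaryHypergeometricCoefficient_le a b hσ hn k)

end Complex

theorem gauss_hypergeometric_theorem (a b c : ℂ)
    (hre : 0 < (c - a - b).re) (hc : ∀ m : ℕ, c ≠ -m) :
    HasSum
      (fun k : ℕ =>
        (ascPochhammer ℂ k).eval a * (ascPochhammer ℂ k).eval b /
          ((ascPochhammer ℂ k).eval c * (k.factorial : ℂ)))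
      (Complex.Gamma c * Complex.Gamma (c - a - b) /
        (Complex.Gamma (c - a) * Complex.Gamma (c - b))) := by
  have hcab : ∀ m : ℕ, c - a - b ≠ -m := ne_neg_natCast_of_re_pos hre
  have hlim := (tendsto_ascPochhammer_mul_div_ascPochhammer_mul a b hc hcab).mul
    (tendsto_tsum_ordinaryHypergeometricCoefficient_add_natCast a b c)
  rw [mul_one] at hlim
  have hsum : ∑' k, ordinaryHypergeometricCoefficient a b c k
      = Gamma c * Gamma (c - a - b) / (Gamma (c - a) * Gamma (c - b)) := by
    refine tendsto_nhds_unique tendsto_const_nhds (hlim.congr fun n ↦ ?_)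
    rw [div_mul_eq_mul_div, div_eq_iff (mul_ne_zero (ascPochhammer_eval_ne_zero hc n)
      (ascPochhammer_eval_ne_zero hcab n)),
      ← ascPochhammer_mul_tsum_ordinaryHypergeometricCoefficient a b hc hre n]
    ring
  rw [← hsum]
  refine (summable_norm_ordinaryHypergeometricCoefficient a b hc hre).of_norm.hasSum.congr_fun
    fun k ↦ ?_
  ring
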